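/- arXiv:2509.15571 — 3 statements merged into one kernel-verified Lean document; each statement's English description precedes it below -/
import Mathlib

section
/- Let (μ_n) be a sequence of Borel probability measures on ℝ^d converging narrowly to a Borel probability measure μ (i.e., ∫ f dμ_n → ∫ f dμ for every bounded continuous f). Suppose each μ_n is absolutely continuous with respect to Lebesgue measure with density ρ_n, and that liminf_{n→∞} ∫ ρ_n² dλ < ∞. Then μ is absolutely continuous with respect to Lebesgue measure, and its density ρ satisfies ∫ ρ² dλ ≤ liminf_{n→∞} ∫ ρ_n² dλ. -/
/-!
For a density `ρ` one has `∫ ρ² = sup_f (2 ∫ f ρ - ∫ f²)` over nonnegative test functions `f`,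
since `2 f ρ ≤ f² + ρ²` with equality at `f = ρ`. The inequalities
`2 ∫ f dμₙ ≤ ∫ f² dλ + ∫ ρₙ² dλ` pass to the narrow limit for continuous compactly supported `f`,
so `2 ∫ f dμ ≤ ∫ f² dλ + L` with `L = liminf ∫ ρₙ²`. Urysohn functions `c` on `K`, `0` off
`U ⊇ K` give `2 c μ(K) ≤ c² λ(U) + L`, so `μ` vanishes on Lebesgue-null compacts and `μ ≪ λ`.
Testing with compactly supported continuous `L²`-approximations of the truncations of `dμ/dλ`
then bounds `∫ (dμ/dλ)²` by `L`.
-/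

open MeasureTheory Filter Topology

open scoped ENNReal NNReal BoundedContinuousFunction

lemma ENNReal.two_mul_le_sq_add_sq (a b : ℝ≥0∞) : 2 * (a * b) ≤ a ^ 2 + b ^ 2 := by
  wlog hab : a ≤ b generalizing a b
  · simpa only [mul_comm a, add_comm (a ^ 2)] using this b a (le_of_not_ge hab)
  obtain ⟨c, rfl⟩ := exists_add_of_le hab
  calc 2 * (a * (a + c)) ≤ 2 * (a * (a + c)) + c ^ 2 := le_self_add
    _ = a ^ 2 + (a + c) ^ 2 := by ring

lemma ENNReal.ofReal_sq_add_ofReal_sq {a b : ℝ} (ha : 0 ≤ a) (hb : 0 ≤ b) :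
    ENNReal.ofReal a ^ 2 + ENNReal.ofReal b ^ 2
      = 2 * (ENNReal.ofReal a * ENNReal.ofReal b) + ‖a - b‖ₑ ^ 2 := by
  rw [Real.enorm_eq_ofReal_abs, ← ENNReal.ofReal_pow ha, ← ENNReal.ofReal_pow hb,
    ← ENNReal.ofReal_pow (abs_nonneg _), sq_abs, ← ENNReal.ofReal_mul ha, ← ENNReal.ofReal_ofNat 2,
    ← ENNReal.ofReal_mul zero_le_two, ← ENNReal.ofReal_add (by positivity) (by positivity),
    ← ENNReal.ofReal_add (by positivity) (by positivity)]
  congr 1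
  ring

namespace MeasureTheory

lemma lintegral_enorm_sq_eq_eLpNorm_sq {α E : Type*} [MeasurableSpace α] [NormedAddCommGroup E]
    (μ : Measure α) (f : α → E) : ∫⁻ x, ‖f x‖ₑ ^ 2 ∂μ = eLpNorm f 2 μ ^ 2 := by
  have := eLpNorm_nnreal_pow_eq_lintegral (μ := μ) (f := f) (p := 2) two_ne_zero
  simp only [NNReal.coe_ofNat, ENNReal.rpow_two, ENNReal.coe_ofNat] at this
  exact this.symm

variable {X : Type*} [TopologicalSpace X] [MeasurableSpace X]

/-- The dual form of `∫ (dν/dμ)² dμ ≤ L`. -/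
def L2DualBound (ν μ : Measure X) (L : ℝ≥0∞) : Prop :=
  ∀ f : X → ℝ, Continuous f → HasCompactSupport f → 0 ≤ f →
    2 * ∫⁻ x, ENNReal.ofReal (f x) ∂ν ≤ ∫⁻ x, ENNReal.ofReal (f x) ^ 2 ∂μ + L

variable {μ : Measure X}

lemma l2DualBound_withDensity [OpensMeasurableSpace X] {ρ : X → ℝ≥0∞} (hρ : Measurable ρ) :
    L2DualBound (μ.withDensity ρ) μ (∫⁻ x, ρ x ^ 2 ∂μ) := by
  intro f hf _ _
  have hF : Measurable fun x => ENNReal.ofReal (f x) := hf.measurable.ennreal_ofReal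
  rw [lintegral_withDensity_eq_lintegral_mul _ hρ hF, ← lintegral_const_mul _ (hρ.mul hF),
    ← lintegral_add_left (hF.pow_const 2)]
  refine lintegral_mono fun x => ?_
  simpa only [Pi.mul_apply, mul_comm (ρ x)] using
    ENNReal.two_mul_le_sq_add_sq (ENNReal.ofReal (f x)) (ρ x)

namespace L2DualBound

lemma mono_left {ν ν' : Measure X} {L : ℝ≥0∞} (h : L2DualBound ν μ L) (hν : ν' ≤ ν) :
    L2DualBound ν' μ L :=
  fun f hf hfc hf0 => le_trans (by gcongr) (h f hf hfc hf0)

lemma of_tendsto [OpensMeasurableSpace X] {ν : ℕ → Measure X} {νlim : Measure X}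
    [∀ n, IsFiniteMeasure (ν n)] [IsFiniteMeasure νlim]
    (hconv : ∀ f : X →ᵇ ℝ, Tendsto (fun n => ∫ x, f x ∂(ν n)) atTop (𝓝 (∫ x, f x ∂νlim)))
    {c : ℕ → ℝ≥0∞} (h : ∀ n, L2DualBound (ν n) μ (c n)) :
    L2DualBound νlim μ (atTop.liminf c) := by
  intro f hf hfc hf0
  set F := ofCompactSupport f hf hfc
  have hF : ∀ (m : Measure X) [IsFiniteMeasure m],
      ENNReal.ofReal (∫ x, F x ∂m) = ∫⁻ x, ENNReal.ofReal (f x) ∂m := fun m _ =>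
    ofReal_integral_eq_lintegral_ofReal (F.integrable m) (ae_of_all _ hf0)
  have hlim :=
    ENNReal.Tendsto.const_mul (ENNReal.tendsto_ofReal (hconv F)) (a := 2) (.inr (by simp))
  simp only [hF] at hlim
  calc 2 * ∫⁻ x, ENNReal.ofReal (f x) ∂νlim
      = atTop.liminf fun n => 2 * ∫⁻ x, ENNReal.ofReal (f x) ∂(ν n) := hlim.liminf_eq.symm
    _ ≤ atTop.liminf fun n => ∫⁻ x, ENNReal.ofReal (f x) ^ 2 ∂μ + c n :=
        liminf_le_liminf (.of_forall fun n => h n f hf hfc hf0)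
    _ = _ := liminf_const_add _ _ _ isBounded_le_of_top.isCobounded_flip isBounded_ge_of_bot

section AbsolutelyContinuous

variable [OpensMeasurableSpace X] [T2Space X] [LocallyCompactSpace X] {ν : Measure X}
  {L : ℝ≥0∞}

lemma mul_measure_le (h : L2DualBound ν μ L) {K U : Set X} (hK : IsCompact K) (hU : IsOpen U)
    (hKU : K ⊆ U) (c : ℝ≥0) : 2 * (c * ν K) ≤ c ^ 2 * μ U + L := by
  obtain ⟨u, hu1, hu0, huc, hu01⟩ :=
    exists_continuous_one_zero_of_isCompact hK hU.isClosed_compl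
      (Set.disjoint_compl_right_iff_subset.mpr hKU)
  have hcu : ∀ x, ENNReal.ofReal (c * u x) = c * ENNReal.ofReal (u x) := fun x => by
    rw [ENNReal.ofReal_mul c.coe_nonneg, ENNReal.ofReal_coe_nnreal]
  have hK_le : ∀ x, K.indicator (fun _ => (c : ℝ≥0∞)) x ≤ ENNReal.ofReal (c * u x) := by
    intro x
    by_cases hx : x ∈ K
    · simp [hx, hu1 hx]
    · simp [hx]
  have hU_le : ∀ x, ENNReal.ofReal (c * u x) ^ 2 ≤ U.indicator (fun _ => (c : ℝ≥0∞) ^ 2) x := by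
    intro x
    by_cases hx : x ∈ U
    · rw [Set.indicator_of_mem hx, hcu x]
      gcongr
      exact mul_le_of_le_one_right' (ENNReal.ofReal_le_one.2 (hu01 x).2)
    · simp [hx, hu0 hx]
  calc 2 * (c * ν K) = 2 * ∫⁻ x, K.indicator (fun _ => (c : ℝ≥0∞)) x ∂ν := by
        rw [lintegral_indicator_const hK.measurableSet]
    _ ≤ 2 * ∫⁻ x, ENNReal.ofReal (c * u x) ∂ν := by gcongr; exact hK_le _
    _ ≤ ∫⁻ x, ENNReal.ofReal (c * u x) ^ 2 ∂μ + L :=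
        h _ (continuous_const.mul u.continuous) huc.mul_left fun x => by
          simpa using mul_nonneg c.coe_nonneg (hu01 x).1
    _ ≤ ∫⁻ x, U.indicator (fun _ => (c : ℝ≥0∞) ^ 2) x ∂μ + L := by gcongr; exact hU_le _
    _ = c ^ 2 * μ U + L := by rw [lintegral_indicator_const hU.measurableSet]

lemma measure_eq_zero_of_isCompact [μ.OuterRegular] (h : L2DualBound ν μ L) (hL : L ≠ ⊤)
    {K : Set X} (hK : IsCompact K) (hμK : μ K = 0) : ν K = 0 := by
  by_contra hνK
  obtain ⟨n, hn⟩ := ENNReal.exists_nat_mul_gt hνK (ENNReal.add_ne_top.2 ⟨ENNReal.one_ne_top, hL⟩)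
  have hn0 : ((n : ℝ≥0∞) ^ 2)⁻¹ ≠ 0 := ENNReal.inv_ne_zero.2 (by simp)
  obtain ⟨U, hKU, hU, hμU⟩ := K.exists_isOpen_lt_of_lt _ (hμK ▸ pos_iff_ne_zero.2 hn0)
  refine hn.not_ge ?_
  calc (n : ℝ≥0∞) * ν K ≤ 2 * ((n : ℝ≥0) * ν K) := by
        rw [ENNReal.coe_natCast]; exact le_mul_of_one_le_left' one_le_two
    _ ≤ (n : ℝ≥0) ^ 2 * μ U + L := h.mul_measure_le hK hU hKU n
    _ ≤ 1 + L := by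
        gcongr
        rw [ENNReal.coe_natCast]
        exact (mul_le_mul_right hμU.le _).trans (ENNReal.mul_inv_le_one _)

lemma absolutelyContinuous [IsFiniteMeasure ν] [ν.InnerRegularCompactLTTop] [μ.OuterRegular]
    (h : L2DualBound ν μ L) (hL : L ≠ ⊤) : ν ≪ μ := by
  refine Measure.AbsolutelyContinuous.mk fun A hA hμA => ?_
  rw [hA.measure_eq_iSup_isCompact_of_ne_top (measure_ne_top ν A)]
  exact ENNReal.iSup_eq_zero.2 fun K => ENNReal.iSup_eq_zero.2 fun hKA => ENNReal.iSup_eq_zero.2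
    fun hK => h.measure_eq_zero_of_isCompact hL hK (measure_mono_null hKA hμA)

end AbsolutelyContinuous

section Density

variable [BorelSpace X] [NormalSpace X] [μ.Regular] {L : ℝ≥0∞}

lemma lintegral_ofReal_sq_le [R1Space X] [WeaklyLocallyCompactSpace X] {r : X → ℝ}
    (hr0 : 0 ≤ r) (hr : MemLp r 2 μ)
    (h : L2DualBound (μ.withDensity fun x => ENNReal.ofReal (r x)) μ L) :
    ∫⁻ x, ENNReal.ofReal (r x) ^ 2 ∂μ ≤ L := by
  refine ENNReal.le_of_forall_pos_le_add fun ε hε _ => ?_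
  obtain ⟨g, hgc, hrg, hg, -⟩ := hr.exists_hasCompactSupport_eLpNorm_sub_le ENNReal.ofNat_ne_top
    (ε := NNReal.sqrt ε) (by simpa using hε.ne')
  set f : X → ℝ := fun x => |g x|
  have hf : Continuous f := continuous_abs.comp hg
  have hR : AEMeasurable (fun x => ENNReal.ofReal (r x)) μ := hr.aemeasurable.ennreal_ofReal
  have hF : Measurable fun x => ENNReal.ofReal (f x) := hf.measurable.ennreal_ofReal
  have hFfin : ∫⁻ x, ENNReal.ofReal (f x) ^ 2 ∂μ ≠ ⊤ := by
    have hFf : ∀ x, ENNReal.ofReal (f x) = ‖f x‖ₑ := fun x =>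
      (Real.enorm_of_nonneg (abs_nonneg _)).symm
    simp_rw [hFf, lintegral_enorm_sq_eq_eLpNorm_sq]
    exact ENNReal.pow_ne_top (hf.memLp_of_hasCompactSupport hgc.abs).eLpNorm_ne_top
  have herr : ∫⁻ x, ‖r x - f x‖ₑ ^ 2 ∂μ ≤ ε := calc
    ∫⁻ x, ‖r x - f x‖ₑ ^ 2 ∂μ = eLpNorm (r - f) 2 μ ^ 2 := lintegral_enorm_sq_eq_eLpNorm_sq μ _
    _ ≤ eLpNorm (r - g) 2 μ ^ 2 := by
        gcongr
        refine eLpNorm_mono fun x => ?_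
        simpa [f, abs_of_nonneg (hr0 x)] using abs_abs_sub_abs_le_abs_sub (r x) (g x)
    _ ≤ NNReal.sqrt ε ^ 2 := by gcongr
    _ = ε := by norm_cast; exact NNReal.sq_sqrt ε
  have hcross := h f hf hgc.abs fun x => abs_nonneg (g x)
  rw [lintegral_withDensity_eq_lintegral_mul₀ hR hF.aemeasurable] at hcross
  refine (ENNReal.add_le_add_iff_right hFfin).1 ?_
  calc ∫⁻ x, ENNReal.ofReal (r x) ^ 2 ∂μ + ∫⁻ x, ENNReal.ofReal (f x) ^ 2 ∂μ
      = ∫⁻ x, 2 * (ENNReal.ofReal (r x) * ENNReal.ofReal (f x)) + ‖r x - f x‖ₑ ^ 2 ∂μ := by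
        rw [← lintegral_add_left' (hR.pow_const 2)]
        exact lintegral_congr fun x => ENNReal.ofReal_sq_add_ofReal_sq (hr0 x) (abs_nonneg _)
    _ ≤ (∫⁻ x, ENNReal.ofReal (f x) ^ 2 ∂μ + L) + ε := by
        rw [lintegral_add_left' (f := fun x => 2 * (ENNReal.ofReal (r x) * ENNReal.ofReal (f x)))
            ((hR.mul hF.aemeasurable).const_mul 2),
          lintegral_const_mul' _ _ ENNReal.ofNat_ne_top]
        exact add_le_add hcross herr
    _ = L + ε + ∫⁻ x, ENNReal.ofReal (f x) ^ 2 ∂μ := by ring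

lemma lintegral_sq_le [T2Space X] [WeaklyLocallyCompactSpace X] [SigmaCompactSpace X]
    {g : X → ℝ≥0∞} (hg : Measurable g) (h : L2DualBound (μ.withDensity g) μ L) :
    ∫⁻ x, g x ^ 2 ∂μ ≤ L := by
  set r : ℕ → X → ℝ := fun n => (compactCovering X n).indicator fun x => (min (g x) n).toReal
  have hR : ∀ n x,
      ENNReal.ofReal (r n x) = (compactCovering X n).indicator (fun x => min (g x) n) x := by
    intro n x
    by_cases hx : x ∈ compactCovering X n <;> simp [r, hx]
  have hr0 : ∀ n, 0 ≤ r n := fun n => Set.indicator_nonneg fun _ _ => ENNReal.toReal_nonneg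
  have hrL : ∀ n, MemLp (r n) 2 μ := by
    intro n
    have hK := isCompact_compactCovering X n
    have : IsFiniteMeasure (μ.restrict (compactCovering X n)) := ⟨by simpa using hK.measure_lt_top⟩
    refine (memLp_indicator_iff_restrict hK.measurableSet).2 <| MemLp.of_bound
      (hg.min measurable_const).ennreal_toReal.aestronglyMeasurable n (ae_of_all _ fun x => ?_)
    rw [Real.norm_of_nonneg ENNReal.toReal_nonneg]
    exact ENNReal.toReal_le_of_le_ofReal n.cast_nonneg (by simp)
  have hrg : ∀ n, μ.withDensity (fun x => ENNReal.ofReal (r n x)) ≤ μ.withDensity g := fun n =>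
    withDensity_mono <| ae_of_all _ fun x => by
      simpa only [hR] using Set.indicator_le (fun _ _ => min_le_left _ _) x
  have hlim : ∀ x, Tendsto (fun n => ENNReal.ofReal (r n x) ^ 2) atTop (𝓝 (g x ^ 2)) := by
    intro x
    obtain ⟨m, hm⟩ := exists_mem_compactCovering x
    have hev : (fun n : ℕ => min (g x) n) =ᶠ[atTop] fun n => ENNReal.ofReal (r n x) :=
      eventually_atTop.2 ⟨m, fun n hn => by
        simp only [hR, Set.indicator_of_mem (compactCovering_subset X hn hm)]⟩
    have htrunc : Tendsto (fun n : ℕ => min (g x) n) atTop (𝓝 (g x)) := by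
      simpa using tendsto_const_nhds.min ENNReal.tendsto_nat_nhds_top
    exact ((ENNReal.continuous_pow 2).tendsto _).comp (htrunc.congr' hev)
  calc ∫⁻ x, g x ^ 2 ∂μ = ∫⁻ x, atTop.liminf (fun n => ENNReal.ofReal (r n x) ^ 2) ∂μ :=
        lintegral_congr fun x => (hlim x).liminf_eq.symm
    _ ≤ atTop.liminf fun n => ∫⁻ x, ENNReal.ofReal (r n x) ^ 2 ∂μ :=
        lintegral_liminf_le' fun n => ((hrL n).aemeasurable.ennreal_ofReal.pow_const 2)
    _ ≤ L := liminf_le_of_frequently_le' <| .of_forall fun n =>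
        ((h.mono_left (hrg n)).lintegral_ofReal_sq_le (hr0 n) (hrL n))

end Density

end L2DualBound

end MeasureTheory

/-- Lower semicontinuity of the L² entropy under narrow convergence: if probability
measures `μₙ` with Lebesgue densities `ρₙ` converge narrowly to `μ` and
`liminf ∫ ρₙ² < ∞`, then `μ` has a Lebesgue density `ρ` with
`∫ ρ² ≤ liminf ∫ ρₙ²`. -/
theorem stmt_4 {d : ℕ} (μ : ℕ → Measure (Fin d → ℝ)) (μlim : Measure (Fin d → ℝ))
    [∀ n, IsProbabilityMeasure (μ n)] [IsProbabilityMeasure μlim]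
    (hconv : ∀ f : (Fin d → ℝ) →ᵇ ℝ,
      Tendsto (fun n => ∫ x, f x ∂(μ n)) atTop (𝓝 (∫ x, f x ∂μlim)))
    (ρ : ℕ → (Fin d → ℝ) → ℝ≥0∞) (hρmeas : ∀ n, Measurable (ρ n))
    (hdens : ∀ n, μ n = volume.withDensity (ρ n))
    (hfin : atTop.liminf (fun n => ∫⁻ x, (ρ n x) ^ 2) < ⊤) :
    μlim ≪ volume ∧
      ∫⁻ x, (μlim.rnDeriv volume x) ^ 2 ≤ atTop.liminf (fun n => ∫⁻ x, (ρ n x) ^ 2) := by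
  have hlim : L2DualBound μlim volume (atTop.liminf fun n => ∫⁻ x, ρ n x ^ 2) :=
    L2DualBound.of_tendsto hconv fun n => hdens n ▸ l2DualBound_withDensity (hρmeas n)
  have hac : μlim ≪ volume := hlim.absolutelyContinuous hfin.ne
  refine ⟨hac, L2DualBound.lintegral_sq_le (Measure.measurable_rnDeriv _ _) ?_⟩
  rwa [Measure.withDensity_rnDeriv_eq _ _ hac]
end

section
/- Let K ⊆ ℝ^d be compact with Lebesgue measure λ(K) > 0, and let m_K denote the uniform probability measure on K, m_K(A) = λ(A ∩ K)/λ(K). Let ε_n → 0 with ε_n > 0, and let (μ_n) be Borel probability measures on ℝ^d, each absolutely continuous with respect to λ with density ρ_n vanishing almost everywhere outside K, converging narrowly to a Borel probability measure μ. If sup_n (1/ε_n)( ∫ ρ_n² dλ − 1/λ(K) ) < ∞, then μ = m_K. -/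
/-!
On `ν = λ|_K` a probability density `f` has `∫ (f - 1/λ(K))² dν = ∫ f² dν - 1/λ(K)`, so the
penalty bound says `‖ρₙ - 1/λ(K)‖²_{L²(ν)} ≤ C εₙ → 0`. By Cauchy–Schwarz, `∫ G dμₙ` then
converges to `∫ G dm_K` for every bounded continuous `G`, and narrow limits of finite
measures are unique.
-/

open MeasureTheory Filter Topology

open scoped ENNReal BoundedContinuousFunction

namespace MeasureTheory

variable {α : Type*} [MeasurableSpace α] {ν : Measure α}

theorem integral_sub_inv_measureReal_univ_sq [IsFiniteMeasure ν] {f : α → ℝ} (hf : MemLp f 2 ν)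
    (hf1 : ∫ x, f x ∂ν = 1) :
    ∫ x, (f x - (ν.real Set.univ)⁻¹) ^ 2 ∂ν = ∫ x, f x ^ 2 ∂ν - (ν.real Set.univ)⁻¹ := by
  have hν : ν.real Set.univ ≠ 0 := by
    intro h0
    rw [measureReal_eq_zero_iff, Measure.measure_univ_eq_zero] at h0
    simp [h0] at hf1
  set c := (ν.real Set.univ)⁻¹
  have hlin : Integrable (fun x => 2 * c * f x) ν := (hf.integrable one_le_two).const_mul _
  calc ∫ x, (f x - c) ^ 2 ∂ν = ∫ x, (f x ^ 2 - 2 * c * f x + c ^ 2) ∂ν := by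
        congr with x; ring
    _ = ∫ x, f x ^ 2 ∂ν - 2 * c * ∫ x, f x ∂ν + ν.real Set.univ * c ^ 2 := by
        rw [integral_add (f := fun x => f x ^ 2 - 2 * c * f x) (hf.integrable_sq.sub hlin)
          (integrable_const _),
          integral_sub hf.integrable_sq hlin, integral_const_mul, integral_const, smul_eq_mul]
    _ = ∫ x, f x ^ 2 ∂ν - c := by
        simp only [hf1, c]; field_simp; ring

theorem abs_integral_mul_le_sqrt_mul_sqrt {f g : α → ℝ} (hf : MemLp f 2 ν) (hg : MemLp g 2 ν) :
    |∫ x, f x * g x ∂ν| ≤ √(∫ x, f x ^ 2 ∂ν) * √(∫ x, g x ^ 2 ∂ν) := by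
  have hnorm_rpow : ∀ y : ℝ, ‖y‖ ^ (2 : ℝ) = y ^ 2 := fun y => by
    rw [Real.rpow_two, Real.norm_eq_abs, sq_abs]
  have holder := integral_mul_norm_le_Lp_mul_Lq (f := f) (g := g) Real.HolderConjugate.two_two
    (by rwa [ENNReal.ofReal_ofNat]) (by rwa [ENNReal.ofReal_ofNat])
  simp only [hnorm_rpow, ← Real.sqrt_eq_rpow] at holder
  calc |∫ x, f x * g x ∂ν| ≤ ∫ x, ‖f x * g x‖ ∂ν := by
        simpa only [Real.norm_eq_abs] using norm_integral_le_integral_norm (fun x => f x * g x)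
    _ = ∫ x, ‖f x‖ * ‖g x‖ ∂ν := by simp only [norm_mul]
    _ ≤ _ := holder

theorem tendsto_integral_mul_of_tendsto_integral_sq_sub {f : ℕ → α → ℝ} {g G : α → ℝ}
    (hf : ∀ n, MemLp (f n) 2 ν) (hg : MemLp g 2 ν) (hG : MemLp G 2 ν)
    (hfg : Tendsto (fun n => ∫ x, (f n x - g x) ^ 2 ∂ν) atTop (𝓝 0)) :
    Tendsto (fun n => ∫ x, G x * f n x ∂ν) atTop (𝓝 (∫ x, G x * g x ∂ν)) := by
  rw [tendsto_iff_norm_sub_tendsto_zero]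
  have hbound : ∀ n, ‖∫ x, G x * f n x ∂ν - ∫ x, G x * g x ∂ν‖
      ≤ √(∫ x, G x ^ 2 ∂ν) * √(∫ x, (f n x - g x) ^ 2 ∂ν) := fun n => by
    rw [← integral_sub (f := fun x => G x * f n x) (g := fun x => G x * g x)
      (hG.integrable_mul (hf n)) (hG.integrable_mul hg)]
    simpa only [Real.norm_eq_abs, Pi.sub_apply, mul_sub] using
      abs_integral_mul_le_sqrt_mul_sqrt hG ((hf n).sub hg)
  refine squeeze_zero (fun _ => norm_nonneg _) hbound ?_
  simpa using (Real.continuous_sqrt.tendsto 0).comp hfg |>.const_mul √(∫ x, G x ^ 2 ∂ν)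

theorem tendsto_integral_withDensity_of_lintegral_sq_le [IsFiniteMeasure ν] {ρ : ℕ → α → ℝ≥0∞}
    (hρ : ∀ n, Measurable (ρ n)) (hρ1 : ∀ n, ∫⁻ x, ρ n x ∂ν = 1) {δ : ℕ → ℝ}
    (hδ : Tendsto δ atTop (𝓝 0))
    (hsq : ∀ n, ∫⁻ x, ρ n x ^ 2 ∂ν ≤ (ν Set.univ)⁻¹ + ENNReal.ofReal (δ n))
    {G : α → ℝ} (hG : MemLp G 2 ν) :
    Tendsto (fun n => ∫ x, G x ∂ν.withDensity (ρ n)) atTop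
      (𝓝 (∫ x, G x ∂((ν Set.univ)⁻¹ • ν))) := by
  have hν : ν Set.univ ≠ 0 := fun h0 => by
    simpa [Measure.measure_univ_eq_zero.1 h0] using hρ1 0
  set c := (ν.real Set.univ)⁻¹
  have hc : ((ν Set.univ)⁻¹).toReal = c := by rw [ENNReal.toReal_inv]; rfl
  have hρ_lt_top : ∀ n, ∀ᵐ x ∂ν, ρ n x < ∞ := fun n =>
    ae_lt_top (hρ n) (by simp [hρ1])
  have hsq_ne_top : ∀ n, ∫⁻ x, ρ n x ^ 2 ∂ν ≠ ∞ := fun n =>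
    ne_top_of_le_ne_top (by simp [hν, ENNReal.add_eq_top]) (hsq n)
  set f : ℕ → α → ℝ := fun n x => (ρ n x).toReal
  have hf_memLp : ∀ n, MemLp (f n) 2 ν := fun n =>
    (memLp_two_iff_integrable_sq (hρ n).ennreal_toReal.aestronglyMeasurable).2 <| by
      simpa only [f, ENNReal.toReal_pow] using integrable_toReal_of_lintegral_ne_top
        ((hρ n).pow_const 2).aemeasurable (hsq_ne_top n)
  have hf_integral : ∀ n, ∫ x, f n x ∂ν = 1 := fun n => by
    simp only [f, integral_toReal (hρ n).aemeasurable (hρ_lt_top n), hρ1, ENNReal.toReal_one]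
  have hf_sq : ∀ n, ∫ x, f n x ^ 2 ∂ν ≤ c + max (δ n) 0 := fun n => by
    have h := ENNReal.toReal_mono (by simp [hν, ENNReal.add_eq_top]) (hsq n)
    rw [ENNReal.toReal_add (by simpa using hν) ENNReal.ofReal_ne_top, hc,
      ENNReal.toReal_ofReal', ← integral_toReal ((hρ n).pow_const 2).aemeasurable
        (ae_lt_top ((hρ n).pow_const 2) (hsq_ne_top n))] at h
    simpa only [f, ENNReal.toReal_pow] using h
  have hvar : Tendsto (fun n => ∫ x, (f n x - c) ^ 2 ∂ν) atTop (𝓝 0) := by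
    have hδ_max : Tendsto (fun n => max (δ n) 0) atTop (𝓝 0) := by
      simpa using hδ.max (tendsto_const_nhds (x := (0 : ℝ)))
    refine squeeze_zero (fun n => integral_nonneg fun x => sq_nonneg _) (fun n => ?_) hδ_max
    rw [integral_sub_inv_measureReal_univ_sq (hf_memLp n) (hf_integral n)]
    linarith [hf_sq n]
  have hlim := tendsto_integral_mul_of_tendsto_integral_sq_sub hf_memLp (memLp_const c) hG hvar
  simp only [integral_withDensity_eq_integral_toReal_smul (hρ _) (hρ_lt_top _), smul_eq_mul,
    mul_comm (ρ _ _).toReal, integral_smul_measure, hc, integral_mul_const] at hlim ⊢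
  rwa [mul_comm] at hlim

theorem withDensity_eq_restrict_withDensity {s : Set α} (hs : MeasurableSet s)
    {ρ : α → ℝ≥0∞} (hρ : ∀ᵐ x ∂ν, x ∉ s → ρ x = 0) :
    ν.withDensity ρ = (ν.restrict s).withDensity ρ := by
  rw [← withDensity_indicator hs]
  refine withDensity_congr_ae ?_
  filter_upwards [hρ] with x hx
  by_cases hxs : x ∈ s <;> simp [hxs, hx]

end MeasureTheory

theorem ENNReal.le_add_ofReal_mul_of_inv_mul_tsub_le {a b C : ℝ≥0∞} {e : ℝ} (he : 0 < e)
    (h : (ENNReal.ofReal e)⁻¹ * (a - b) ≤ C) : a ≤ b + ENNReal.ofReal e * C :=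
  tsub_le_iff_left.1 <|
    (ENNReal.inv_mul_le_iff (ENNReal.ofReal_pos.2 he).ne' ENNReal.ofReal_ne_top).1 h

theorem stmt_9_general {d : ℕ} (K : Set (Fin d → ℝ)) (hKcomp : IsCompact K)
    (ε : ℕ → ℝ) (hεpos : ∀ n, 0 < ε n) (hε : Tendsto ε atTop (𝓝 0))
    (μ : ℕ → Measure (Fin d → ℝ)) (μlim : Measure (Fin d → ℝ))
    [∀ n, IsProbabilityMeasure (μ n)] [IsProbabilityMeasure μlim]
    (ρ : ℕ → (Fin d → ℝ) → ℝ≥0∞) (hρmeas : ∀ n, Measurable (ρ n))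
    (hdens : ∀ n, μ n = volume.withDensity (ρ n))
    (hρsupp : ∀ n, ∀ᵐ x ∂volume, x ∉ K → ρ n x = 0)
    (hconv : ∀ f : (Fin d → ℝ) →ᵇ ℝ,
      Tendsto (fun n => ∫ x, f x ∂(μ n)) atTop (𝓝 (∫ x, f x ∂μlim)))
    (hbdd : (⨆ n, (ENNReal.ofReal (ε n))⁻¹ * ((∫⁻ x, (ρ n x) ^ 2) - (volume K)⁻¹)) < ⊤) :
    μlim = (volume K)⁻¹ • volume.restrict K := by
  set ν := volume.restrict K
  have : IsFiniteMeasure ν := isFiniteMeasure_restrict.2 hKcomp.measure_lt_top.ne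
  have hνK : ν Set.univ = volume K := Measure.restrict_apply_univ K
  have hμ : ∀ n, μ n = ν.withDensity (ρ n) := fun n =>
    (hdens n).trans (withDensity_eq_restrict_withDensity hKcomp.measurableSet (hρsupp n))
  have hρ1 : ∀ n, ∫⁻ x, ρ n x ∂ν = 1 := fun n => by
    simpa [hμ n] using measure_univ (μ := μ n)
  set penalty : ℕ → ℝ≥0∞ := fun n =>
    (ENNReal.ofReal (ε n))⁻¹ * ((∫⁻ x, (ρ n x) ^ 2) - (volume K)⁻¹)
  set C := ⨆ n, penalty n
  have hsq : ∀ n, ∫⁻ x, ρ n x ^ 2 ∂ν ≤ (ν Set.univ)⁻¹ + ENNReal.ofReal (ε n * C.toReal) :=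
    fun n => by
      rw [hνK, ENNReal.ofReal_mul (hεpos n).le, ENNReal.ofReal_toReal hbdd.ne]
      exact (setLIntegral_le_lintegral K _).trans
        (ENNReal.le_add_ofReal_mul_of_inv_mul_tsub_le (hεpos n) (le_iSup penalty n))
  have hδ : Tendsto (fun n => ε n * C.toReal) atTop (𝓝 0) := by
    simpa using hε.mul_const C.toReal
  have hlim : ∀ G : (Fin d → ℝ) →ᵇ ℝ,
      Tendsto (fun n => ∫ x, G x ∂(μ n)) atTop (𝓝 (∫ x, G x ∂((ν Set.univ)⁻¹ • ν))) :=
    fun G => by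
      simpa only [hμ] using tendsto_integral_withDensity_of_lintegral_sq_le hρmeas hρ1 hδ hsq
        (G.memLp_top.mono_exponent le_top)
  rw [← hνK]
  exact ext_of_forall_integral_eq_of_IsFiniteMeasure fun G =>
    tendsto_nhds_unique (hconv G) (hlim G)

/-- If probability measures `μₙ` with Lebesgue densities `ρₙ` supported (a.e.) in a
compact set `K` of positive Lebesgue measure converge narrowly to `μ`, `εₙ → 0` with
`εₙ > 0`, and the shifted entropy penalties `(1/εₙ)(∫ ρₙ² − 1/λ(K))` are uniformly
bounded, then `μ` is the uniform probability measure on `K`. -/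
theorem stmt_9 {d : ℕ} (K : Set (Fin d → ℝ)) (hKcomp : IsCompact K)
    (hKpos : 0 < volume K)
    (ε : ℕ → ℝ) (hεpos : ∀ n, 0 < ε n) (hε : Tendsto ε atTop (𝓝 0))
    (μ : ℕ → Measure (Fin d → ℝ)) (μlim : Measure (Fin d → ℝ))
    [∀ n, IsProbabilityMeasure (μ n)] [IsProbabilityMeasure μlim]
    (ρ : ℕ → (Fin d → ℝ) → ℝ≥0∞) (hρmeas : ∀ n, Measurable (ρ n))
    (hdens : ∀ n, μ n = volume.withDensity (ρ n))
    (hρsupp : ∀ n, ∀ᵐ x ∂volume, x ∉ K → ρ n x = 0)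
    (hconv : ∀ f : (Fin d → ℝ) →ᵇ ℝ,
      Tendsto (fun n => ∫ x, f x ∂(μ n)) atTop (𝓝 (∫ x, f x ∂μlim)))
    (hbdd : (⨆ n, (ENNReal.ofReal (ε n))⁻¹ * ((∫⁻ x, (ρ n x) ^ 2) - (volume K)⁻¹)) < ⊤) :
    μlim = (volume K)⁻¹ • volume.restrict K :=
  stmt_9_general K hKcomp ε hεpos hε μ μlim ρ hρmeas hdens hρsupp hconv hbdd
end

section
/- Let f_0, f_1, …, f_m : ℝ^d → ℝ^d be continuously differentiable vector fields with linear growth: there is C > 0 with ‖f_i(x)‖ ≤ C(1 + ‖x‖) for all x and all i. Let U ⊆ ℝ^m be nonempty, compact, and convex, and T > 0. Suppose u_n ∈ L²([0,T]; ℝ^m) with u_n(t) ∈ U a.e. converge weakly in L² to u, and x_{n,0} → x_0 in ℝ^d. Let x_n : [0,T] → ℝ^d be absolutely continuous curves with x_n(0) = x_{n,0} and x_n'(t) = f_0(x_n(t)) + Σ_{i=1}^m (u_n)_i(t) f_i(x_n(t)) for a.e. t, and let x : [0,T] → ℝ^d be absolutely continuous with x(0) = x_0 and x'(t) = f_0(x(t))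 + Σ_{i=1}^m u_i(t) f_i(x(t)) for a.e. t. Then x_n(T) → x(T). -/
/-!
Since the controls take values in a bounded set and the initial points converge, Grönwall's
inequality confines all trajectories to one ball, on which the vector fields are Lipschitz. Put
`gₙ(t) = ∫₀ᵗ ∑ᵢ (uₙ - u)ᵢ(s) fᵢ(x(s)) ds`. Testing the weak convergence against the bounded
functions `𝟙_(0,t] · fᵢ(x(·))` coordinatewise gives `gₙ(t) → 0` for every `t`, hence
`∫₀ᵀ ‖gₙ‖ → 0` by dominated convergence. The difference `xₙ - x - gₙ` solves an integral equation
whose integrand is `L`-Lipschitz in `xₙ - x`, so Grönwall gives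
`‖xₙ(T) - x(T)‖ ≤ (‖xₙ(0) - x(0)‖ + L ∫₀ᵀ ‖gₙ‖) e^{LT} + ‖gₙ(T)‖ → 0`.
-/

open MeasureTheory Filter Topology Set
open scoped ENNReal NNReal

theorem le_mul_exp_of_le_add_mul_setIntegral {φ : ℝ → ℝ} {a b δ K : ℝ} (hK : 0 ≤ K)
    (hφ : ContinuousOn φ (Icc a b))
    (h : ∀ t ∈ Icc a b, φ t ≤ δ + K * ∫ s in Ioc a t, φ s) :
    ∀ t ∈ Icc a b, φ t ≤ δ * Real.exp (K * (t - a)) := by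
  set ψ : ℝ → ℝ := fun t => δ + K * ∫ s in Ioc a t, φ s
  have hint : IntegrableOn φ (Icc a b) := hφ.integrableOn_compact isCompact_Icc
  have hderiv : ∀ t ∈ Ico a b, HasDerivWithinAt ψ (K * φ t) (Ici t) t := by
    intro t ht
    have : Fact (t ∈ Icc a b) := ⟨Ico_subset_Icc_self ht⟩
    have hprim : HasDerivWithinAt (fun u => ∫ s in a..u, φ s) (φ t) (Icc a b) t :=
      intervalIntegral.integral_hasDerivWithinAt_right
        ((hφ.mono (Icc_subset_Icc_right ht.2.le)).intervalIntegrable_of_Icc ht.1)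
        (hφ.stronglyMeasurableAtFilter_nhdsWithin measurableSet_Icc t)
        (hφ t (Ico_subset_Icc_self ht))
    have hIoc : HasDerivWithinAt (fun u => ∫ s in Ioc a u, φ s) (φ t) (Icc a b) t :=
      hprim.congr (fun u hu => (intervalIntegral.integral_of_le hu.1).symm)
        (intervalIntegral.integral_of_le ht.1).symm
    exact ((hIoc.const_mul K).const_add δ).mono_of_mem_nhdsWithin (Icc_mem_nhdsGE_of_mem ht)
  have hψ : ∀ t ∈ Icc a b, ψ t ≤ gronwallBound δ K 0 (t - a) :=
    le_gronwallBound_of_liminf_deriv_right_le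
      (continuousOn_const.add ((intervalIntegral.continuousOn_primitive hint).const_smul K))
      (fun t ht _ hr => (hderiv t ht).liminf_right_slope_le hr) (by simp [ψ])
      (fun t ht => by
        simpa [ψ] using mul_le_mul_of_nonneg_left (h t (Ico_subset_Icc_self ht)) hK)
  intro t ht
  rw [← gronwallBound_ε0]
  exact (h t ht).trans (hψ t ht)

theorem norm_le_of_sub_eq_add_setIntegral {E : Type*} [NormedAddCommGroup E] [NormedSpace ℝ E]
    {y g D : ℝ → E} {e : E} {a b L : ℝ} (hab : a ≤ b)
    (hL : 0 ≤ L) (hy : ContinuousOn y (Icc a b)) (hg : ContinuousOn g (Icc a b))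
    (hD : ∀ᵐ s ∂volume.restrict (Icc a b), ‖D s‖ ≤ L * ‖y s‖)
    (heq : ∀ t ∈ Icc a b, y t - g t = e + ∫ s in Ioc a t, D s) :
    ‖y b‖ ≤ (‖e‖ + L * ∫ s in Ioc a b, ‖g s‖) * Real.exp (L * (b - a)) + ‖g b‖ := by
  have hint : ∀ {F : ℝ → E}, ContinuousOn F (Icc a b) → ∀ t ∈ Icc a b,
      IntegrableOn (fun s => ‖F s‖) (Ioc a t) := fun hF t ht =>
    (hF.norm.integrableOn_compact isCompact_Icc).mono_set
      (Ioc_subset_Icc_self.trans (Icc_subset_Icc_right ht.2))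
  have hyg : ContinuousOn (fun s => y s - g s) (Icc a b) := hy.sub hg
  have hgronwall := le_mul_exp_of_le_add_mul_setIntegral (φ := fun t => ‖y t - g t‖)
    (δ := ‖e‖ + L * ∫ s in Ioc a b, ‖g s‖) hL hyg.norm
    fun t ht => by
      have hD' : ∀ᵐ s ∂volume.restrict (Ioc a t), ‖D s‖ ≤ L * ‖y s‖ :=
        ae_restrict_of_ae_restrict_of_subset
          (Ioc_subset_Icc_self.trans (Icc_subset_Icc_right ht.2)) hD
      have hgt : ∫ s in Ioc a t, ‖g s‖ ≤ ∫ s in Ioc a b, ‖g s‖ :=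
        setIntegral_mono_set (hint hg b ⟨hab, le_rfl⟩) (.of_forall fun _ => norm_nonneg _)
          (Ioc_subset_Ioc_right ht.2).eventuallyLE
      calc ‖y t - g t‖ ≤ ‖e‖ + ∫ s in Ioc a t, ‖D s‖ := by
            rw [heq t ht]; exact norm_add_le_of_le le_rfl (norm_integral_le_integral_norm _)
        _ ≤ ‖e‖ + ∫ s in Ioc a t, L * (‖y s - g s‖ + ‖g s‖) := by
            refine add_le_add_right (integral_mono_of_nonneg
              (.of_forall fun s => norm_nonneg (D s))
              (((hint hyg t ht).add (hint hg t ht)).const_mul L) ?_) _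
            filter_upwards [hD'] with s hs
            exact hs.trans (mul_le_mul_of_nonneg_left (norm_le_norm_sub_add (y s) (g s)) hL)
        _ = ‖e‖ + L * (∫ s in Ioc a t, ‖g s‖) + L * ∫ s in Ioc a t, ‖y s - g s‖ := by
            rw [integral_const_mul, integral_add (hint hyg t ht) (hint hg t ht)]; ring
        _ ≤ ‖e‖ + L * (∫ s in Ioc a b, ‖g s‖) + L * ∫ s in Ioc a t, ‖y s - g s‖ := by
            gcongr
  calc ‖y b‖ ≤ ‖y b - g b‖ + ‖g b‖ := norm_le_norm_sub_add _ _
    _ ≤ _ := by gcongr; exact hgronwall b ⟨hab, le_rfl⟩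

theorem ContinuousOn.memLp_top_restrict {α F : Type*} [TopologicalSpace α] [MeasurableSpace α]
    [OpensMeasurableSpace α] [NormedAddCommGroup F] [SecondCountableTopologyEither α F]
    {f : α → F} {s : Set α} (hf : ContinuousOn f s) (hs : IsCompact s) (hsm : MeasurableSet s)
    (μ : Measure α) : MemLp f ∞ (μ.restrict s) := by
  obtain ⟨R, hR⟩ := hs.exists_bound_of_continuousOn hf
  exact memLp_top_of_bound (hf.aestronglyMeasurable hsm) R ((ae_restrict_mem hsm).mono hR)

theorem tendsto_setIntegral_norm_primitive {E : Type*} [NormedAddCommGroup E] [NormedSpace ℝ E]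
    {h : ℕ → ℝ → E} {β : ℝ → ℝ} {a b : ℝ}
    (hh : ∀ n, AEStronglyMeasurable (h n) (volume.restrict (Icc a b)))
    (hβ : IntegrableOn β (Icc a b)) (hhβ : ∀ n, ∀ᵐ s ∂volume.restrict (Icc a b), ‖h n s‖ ≤ β s)
    (hlim : ∀ t ∈ Icc a b, Tendsto (fun n => ∫ s in Ioc a t, h n s) atTop (𝓝 0)) :
    Tendsto (fun n => ∫ t in Ioc a b, ‖∫ s in Ioc a t, h n s‖) atTop (𝓝 0) := by
  have hsub : ∀ t ∈ Icc a b, Ioc a t ⊆ Icc a b := fun t ht =>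
    Ioc_subset_Icc_self.trans (Icc_subset_Icc_right ht.2)
  have hbound : ∀ n, ∀ t ∈ Icc a b, ‖∫ s in Ioc a t, h n s‖ ≤ ∫ s in Ioc a b, β s := by
    intro n t ht
    calc ‖∫ s in Ioc a t, h n s‖ ≤ ∫ s in Ioc a t, β s :=
          norm_integral_le_of_norm_le (hβ.mono_set (hsub t ht))
            (ae_restrict_of_ae_restrict_of_subset (hsub t ht) (hhβ n))
      _ ≤ ∫ s in Ioc a b, β s :=
          setIntegral_mono_set (hβ.mono_set Ioc_subset_Icc_self)
            (ae_restrict_of_ae_restrict_of_subset Ioc_subset_Icc_self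
              ((hhβ n).mono fun s hs => (norm_nonneg _).trans hs))
            (Ioc_subset_Ioc_right ht.2).eventuallyLE
  have hcont : ∀ n, ContinuousOn (fun t => ∫ s in Ioc a t, h n s) (Icc a b) := fun n =>
    intervalIntegral.continuousOn_primitive (hβ.mono' (hh n) (hhβ n))
  simpa using tendsto_integral_of_dominated_convergence (fun _ => ∫ s in Ioc a b, β s)
    (fun n => ((hcont n).norm.mono Ioc_subset_Icc_self).aestronglyMeasurable measurableSet_Ioc)
    (integrable_const _)
    (fun n => (ae_restrict_mem measurableSet_Ioc).mono fun t ht => by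
      simpa using hbound n t (Ioc_subset_Icc_self ht))
    ((ae_restrict_mem measurableSet_Ioc).mono fun t ht =>
      (hlim t (Ioc_subset_Icc_self ht)).norm)

theorem tendsto_of_forall_strongDual_tendsto {𝕜 E β : Type*} [NontriviallyNormedField 𝕜]
    [CompleteSpace 𝕜] [NormedAddCommGroup E] [NormedSpace 𝕜 E] [FiniteDimensional 𝕜 E]
    {l : Filter β} {y : β → E} {a : E}
    (h : ∀ φ : StrongDual 𝕜 E, Tendsto (fun n => φ (y n)) l (𝓝 (φ a))) :
    Tendsto y l (𝓝 a) := by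
  let e := (Module.finBasis 𝕜 E).equivFunL
  have he : Tendsto (fun n => e (y n)) l (𝓝 (e a)) :=
    tendsto_pi_nhds.2 fun j => h ((ContinuousLinearMap.proj j).comp e.toContinuousLinearMap)
  simpa [Function.comp_def] using (e.symm.continuous.tendsto _).comp he

section WeakL2

variable {α ι : Type*} [MeasurableSpace α] [Fintype ι]

def TendstoWeakL2 (μ : Measure α) (u : ℕ → α → ι → ℝ) (u' : α → ι → ℝ) : Prop :=
  ∀ v : α → ι → ℝ, MemLp v 2 μ →
    Tendsto (fun n => ∫ a, ∑ i, v a i * u n a i ∂μ) atTop (𝓝 (∫ a, ∑ i, v a i * u' a i ∂μ))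

variable {μ : Measure α} {u : ℕ → α → ι → ℝ} {u' : α → ι → ℝ}

theorem TendstoWeakL2.restrict (h : TendstoWeakL2 μ u u') {s : Set α} (hs : MeasurableSet s) :
    TendstoWeakL2 (μ.restrict s) u u' := by
  intro v hv
  have hind : ∀ w : α → ι → ℝ,
      ∫ a, ∑ i, s.indicator v a i * w a i ∂μ = ∫ a in s, ∑ i, v a i * w a i ∂μ := by
    intro w
    rw [← integral_indicator hs]
    congr with a
    by_cases ha : a ∈ s <;> simp [ha]
  simpa only [hind] using h (s.indicator v) ((memLp_indicator_iff_restrict hs).2 hv)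

theorem TendstoWeakL2.tendsto_integral_sum_smul {E : Type*} [NormedAddCommGroup E]
    [NormedSpace ℝ E] [FiniteDimensional ℝ E] [IsFiniteMeasure μ] (h : TendstoWeakL2 μ u u')
    (hu : ∀ n, Integrable (u n) μ) (hu' : Integrable u' μ) {Φ : ι → α → E}
    (hΦ : ∀ i, MemLp (Φ i) ∞ μ) :
    Tendsto (fun n => ∫ a, ∑ i, u n a i • Φ i a ∂μ) atTop
      (𝓝 (∫ a, ∑ i, u' a i • Φ i a ∂μ)) := by
  refine tendsto_of_forall_strongDual_tendsto (𝕜 := ℝ) fun φ => ?_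
  have hcomm : ∀ w : α → ι → ℝ, Integrable w μ →
      φ (∫ a, ∑ i, w a i • Φ i a ∂μ) = ∫ a, ∑ i, φ (Φ i a) * w a i ∂μ := by
    intro w hw
    have hint : Integrable (fun a => ∑ i, w a i • Φ i a) μ :=
      integrable_finsetSum _ fun i _ => (hw.eval i).smul_of_top_left (hΦ i)
    rw [← φ.integral_comp_comm hint]
    simp [mul_comm]
  simp only [hcomm _ (hu _), hcomm u' hu']
  exact h _ (MemLp.of_eval fun i => ((hΦ i).continuousLinearMap_comp φ).mono_exponent le_top)

end WeakL2

section ControlField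

variable {E ι : Type*} [NormedAddCommGroup E] [NormedSpace ℝ E] [Fintype ι]

theorem norm_add_sum_smul_le {a₀ : E} {a : ι → E} {c : ι → ℝ} {B M : ℝ} (h₀ : ‖a₀‖ ≤ B)
    (ha : ∀ i, ‖a i‖ ≤ B) (hc : ‖c‖ ≤ M) :
    ‖a₀ + ∑ i, c i • a i‖ ≤ (1 + Fintype.card ι * M) * B := by
  have hsum : ‖∑ i, c i • a i‖ ≤ Fintype.card ι * (M * B) := by
    refine (norm_sum_le _ _).trans ?_
    simpa using Finset.sum_le_card_nsmul Finset.univ (fun i => ‖c i • a i‖) (M * B)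
      fun i _ => by
        rw [norm_smul]
        exact mul_le_mul ((norm_le_pi_norm c i).trans hc) (ha i) (norm_nonneg _)
          ((norm_nonneg c).trans hc)
  calc ‖a₀ + ∑ i, c i • a i‖ ≤ B + Fintype.card ι * (M * B) := norm_add_le_of_le h₀ hsum
    _ = (1 + Fintype.card ι * M) * B := by ring

variable (f₀ : E → E) (f : ι → E → E)

def controlField (c : ι → ℝ) (p : E) : E := f₀ p + ∑ i, c i • f i p

variable {f₀ f} {C M T : ℝ} {w w' : ℝ → ι → ℝ} {ξ ξ' : ℝ → E} {ξ₀ ξ₀' : E}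

theorem continuous_controlField (h₀ : Continuous f₀) (hf : ∀ i, Continuous (f i)) :
    Continuous fun q : (ι → ℝ) × E => controlField f₀ f q.1 q.2 := by
  unfold controlField
  fun_prop

theorem norm_controlField_le (h₀ : ∀ p, ‖f₀ p‖ ≤ C * (1 + ‖p‖))
    (hf : ∀ i p, ‖f i p‖ ≤ C * (1 + ‖p‖)) {c : ι → ℝ} (hc : ‖c‖ ≤ M) (p : E) :
    ‖controlField f₀ f c p‖ ≤ (1 + Fintype.card ι * M) * C * (1 + ‖p‖) := by
  rw [mul_assoc]
  exact norm_add_sum_smul_le (h₀ p) (fun i => hf i p) hc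

theorem norm_controlField_sub_le {K : ℝ≥0} {S : Set E} (h₀ : LipschitzOnWith K f₀ S)
    (hf : ∀ i, LipschitzOnWith K (f i) S) {c : ι → ℝ} (hc : ‖c‖ ≤ M) {p q : E}
    (hp : p ∈ S) (hq : q ∈ S) :
    ‖controlField f₀ f c p - controlField f₀ f c q‖ ≤
      (1 + Fintype.card ι * M) * K * ‖p - q‖ := by
  have hsub : controlField f₀ f c p - controlField f₀ f c q
      = (f₀ p - f₀ q) + ∑ i, c i • (f i p - f i q) := by
    simp only [controlField, smul_sub, Finset.sum_sub_distrib]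
    abel
  rw [hsub, mul_assoc]
  exact norm_add_sum_smul_le (h₀.norm_sub_le hp hq) (fun i => (hf i).norm_sub_le hp hq) hc

theorem exists_lipschitzOnWith_of_contDiff (h₀ : ContDiff ℝ 1 f₀)
    (hf : ∀ i, ContDiff ℝ 1 (f i)) {S : Set E} (hS : IsCompact S) :
    ∃ K, LipschitzOnWith K f₀ S ∧ ∀ i, LipschitzOnWith K (f i) S := by
  obtain ⟨K, hK⟩ := ((h₀.prodMk (contDiff_pi.2 hf)).locallyLipschitz.locallyLipschitzOn
    ).exists_lipschitzOnWith_of_compact hS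
  refine ⟨K, ?_, fun i => ?_⟩
  · simpa [Function.comp_def] using LipschitzWith.prod_fst.comp_lipschitzOnWith hK
  · simpa [Function.comp_def] using (LipschitzWith.eval i).comp_lipschitzOnWith
      (LipschitzWith.prod_snd.comp_lipschitzOnWith hK)

theorem integrableOn_controlField (h₀c : Continuous f₀) (hfc : ∀ i, Continuous (f i))
    (h₀ : ∀ p, ‖f₀ p‖ ≤ C * (1 + ‖p‖)) (hf : ∀ i p, ‖f i p‖ ≤ C * (1 + ‖p‖)) {a b : ℝ}
    (hw : AEStronglyMeasurable w (volume.restrict (Icc a b)))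
    (hwM : ∀ᵐ s ∂volume.restrict (Icc a b), ‖w s‖ ≤ M) (hξ : ContinuousOn ξ (Icc a b)) :
    IntegrableOn (fun s => controlField f₀ f (w s) (ξ s)) (Icc a b) := by
  have hbound :
      ContinuousOn (fun s => (1 + Fintype.card ι * M) * C * (1 + ‖ξ s‖)) (Icc a b) :=
    continuousOn_const.mul (continuousOn_const.add hξ.norm)
  refine Integrable.mono' (hbound.integrableOn_compact isCompact_Icc)
    ((continuous_controlField h₀c hfc).comp_aestronglyMeasurable
      (hw.prodMk (hξ.aestronglyMeasurable measurableSet_Icc))) ?_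
  filter_upwards [hwM] with s hs
  exact norm_controlField_le h₀ hf hs _

theorem norm_le_of_eq_add_setIntegral_controlField (h₀ : ∀ p, ‖f₀ p‖ ≤ C * (1 + ‖p‖))
    (hf : ∀ i p, ‖f i p‖ ≤ C * (1 + ‖p‖)) (hM : 0 ≤ M)
    (hwM : ∀ᵐ s ∂volume.restrict (Icc 0 T), ‖w s‖ ≤ M) (hξ : ContinuousOn ξ (Icc 0 T))
    {A : ℝ} (hξ₀ : ‖ξ₀‖ ≤ A)
    (hode : ∀ t ∈ Icc 0 T, ξ t = ξ₀ + ∫ s in Ioc 0 t, controlField f₀ f (w s) (ξ s)) :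
    ∀ t ∈ Icc 0 T, ‖ξ t‖ ≤
      (A + (1 + Fintype.card ι * M) * C * T) * Real.exp ((1 + Fintype.card ι * M) * C * T) := by
  set K := (1 + Fintype.card ι * M) * C
  have hK : 0 ≤ K := by
    have : 0 ≤ C := by simpa using (norm_nonneg _).trans (h₀ 0)
    positivity
  have hgronwall := le_mul_exp_of_le_add_mul_setIntegral (φ := fun t => ‖ξ t‖)
    (δ := A + K * T) hK hξ.norm fun t ht => by
      have hnorm : IntegrableOn (fun s => ‖ξ s‖) (Ioc 0 t) :=
        (hξ.norm.integrableOn_compact isCompact_Icc).mono_set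
          (Ioc_subset_Icc_self.trans (Icc_subset_Icc_right ht.2))
      have hone : IntegrableOn (fun _ => (1 : ℝ)) (Ioc 0 t) :=
        integrableOn_const measure_Ioc_lt_top.ne
      calc ‖ξ t‖ ≤ ‖ξ₀‖ + ∫ s in Ioc 0 t, ‖controlField f₀ f (w s) (ξ s)‖ := by
            rw [hode t ht]; exact norm_add_le_of_le le_rfl (norm_integral_le_integral_norm _)
        _ ≤ A + ∫ s in Ioc 0 t, K * (1 + ‖ξ s‖) := by
            refine add_le_add hξ₀ (integral_mono_of_nonneg (.of_forall fun _ => norm_nonneg _)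
              ((hone.add hnorm).const_mul K) ?_)
            filter_upwards [ae_restrict_of_ae_restrict_of_subset
              (Ioc_subset_Icc_self.trans (Icc_subset_Icc_right ht.2)) hwM] with s hs
            exact norm_controlField_le h₀ hf hs _
        _ = A + K * t + K * ∫ s in Ioc 0 t, ‖ξ s‖ := by
            rw [integral_const_mul, integral_add hone hnorm,
              setIntegral_const, Real.volume_real_Ioc_of_le ht.1]
            simp only [sub_zero, smul_eq_mul, mul_one]
            ring
        _ ≤ A + K * T + K * ∫ s in Ioc 0 t, ‖ξ s‖ := by gcongr; exact ht.2
  intro t ht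
  have hA : 0 ≤ A + K * T :=
    add_nonneg ((norm_nonneg _).trans hξ₀) (mul_nonneg hK (ht.1.trans ht.2))
  calc ‖ξ t‖ ≤ (A + K * T) * Real.exp (K * (t - 0)) := hgronwall t ht
    _ ≤ (A + K * T) * Real.exp (K * T) := by rw [sub_zero]; gcongr; exact ht.2

theorem tendsto_setIntegral_controlField_sub [FiniteDimensional ℝ E]
    (hfc : ∀ i, Continuous (f i)) {u : ℕ → ℝ → ι → ℝ}
    (hweak : TendstoWeakL2 (volume.restrict (Icc 0 T)) u w)
    (hu : ∀ n, IntegrableOn (u n) (Icc 0 T)) (hw : IntegrableOn w (Icc 0 T))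
    (hξ : ContinuousOn ξ (Icc 0 T)) {t : ℝ} (ht : t ∈ Icc 0 T) :
    Tendsto (fun n => ∫ s in Ioc 0 t,
      (controlField f₀ f (u n s) (ξ s) - controlField f₀ f (w s) (ξ s))) atTop (𝓝 0) := by
  have hsub : Ioc 0 t ⊆ Icc 0 T := Ioc_subset_Icc_self.trans (Icc_subset_Icc_right ht.2)
  have hμ : (volume.restrict (Icc 0 T)).restrict (Ioc 0 t) = volume.restrict (Ioc 0 t) := by
    rw [Measure.restrict_restrict measurableSet_Ioc, inter_eq_self_of_subset_left hsub]
  have hΦ : ∀ i, MemLp (fun s => f i (ξ s)) ∞ (volume.restrict (Ioc 0 t)) := fun i =>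
    (((hfc i).comp_continuousOn hξ).memLp_top_restrict isCompact_Icc measurableSet_Icc _
      ).mono_measure (Measure.restrict_mono hsub le_rfl)
  have hint : ∀ v : ℝ → ι → ℝ, IntegrableOn v (Icc 0 T) →
      IntegrableOn (fun s => ∑ i, v s i • f i (ξ s)) (Ioc 0 t) := fun v hv =>
    integrable_finsetSum _ fun i _ => ((hv.mono_set hsub).eval i).smul_of_top_left (hΦ i)
  have hweak' := hweak.restrict (measurableSet_Ioc (a := 0) (b := t))
  rw [hμ] at hweak'
  refine (tendsto_sub_nhds_zero_iff.2 (hweak'.tendsto_integral_sum_smul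
    (fun n => (hu n).mono_set hsub) (hw.mono_set hsub) hΦ)).congr fun n => ?_
  rw [← integral_sub (hint _ (hu n)) (hint _ hw)]
  simp only [controlField, add_sub_add_left_eq_sub]

theorem tendsto_setIntegral_norm_setIntegral_controlField_sub [FiniteDimensional ℝ E]
    (h₀c : Continuous f₀) (hfc : ∀ i, Continuous (f i)) (h₀ : ∀ p, ‖f₀ p‖ ≤ C * (1 + ‖p‖))
    (hf : ∀ i p, ‖f i p‖ ≤ C * (1 + ‖p‖)) {u : ℕ → ℝ → ι → ℝ}
    (hu : ∀ n, AEStronglyMeasurable (u n) (volume.restrict (Icc 0 T)))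
    (hw : AEStronglyMeasurable w (volume.restrict (Icc 0 T)))
    (huM : ∀ n, ∀ᵐ s ∂volume.restrict (Icc 0 T), ‖u n s‖ ≤ M)
    (hwM : ∀ᵐ s ∂volume.restrict (Icc 0 T), ‖w s‖ ≤ M)
    (hweak : TendstoWeakL2 (volume.restrict (Icc 0 T)) u w) (hξ : ContinuousOn ξ (Icc 0 T)) :
    Tendsto (fun n => ∫ t in Ioc 0 T,
      ‖∫ s in Ioc 0 t, (controlField f₀ f (u n s) (ξ s) - controlField f₀ f (w s) (ξ s))‖)
      atTop (𝓝 0) := by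
  set K := (1 + Fintype.card ι * M) * C
  have hβ : ContinuousOn (fun s => 2 * (K * (1 + ‖ξ s‖))) (Icc 0 T) :=
    continuousOn_const.mul (continuousOn_const.mul (continuousOn_const.add hξ.norm))
  refine tendsto_setIntegral_norm_primitive
    (fun n => ((integrableOn_controlField h₀c hfc h₀ hf (hu n) (huM n) hξ).sub
      (integrableOn_controlField h₀c hfc h₀ hf hw hwM hξ)).aestronglyMeasurable)
    (hβ.integrableOn_compact isCompact_Icc) (fun n => ?_) fun t ht =>
      tendsto_setIntegral_controlField_sub hfc hweak
        (fun n => Integrable.of_bound (hu n) M (huM n)) (Integrable.of_bound hw M hwM) hξ ht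
  filter_upwards [huM n, hwM] with s hus hws
  calc ‖controlField f₀ f (u n s) (ξ s) - controlField f₀ f (w s) (ξ s)‖
      ≤ K * (1 + ‖ξ s‖) + K * (1 + ‖ξ s‖) :=
        norm_sub_le_of_le (norm_controlField_le h₀ hf hus _) (norm_controlField_le h₀ hf hws _)
    _ = 2 * (K * (1 + ‖ξ s‖)) := by ring

theorem norm_sub_le_of_eq_add_setIntegral_controlField {K : ℝ≥0} {S : Set E}
    (h₀ : LipschitzOnWith K f₀ S) (hf : ∀ i, LipschitzOnWith K (f i) S) (hM : 0 ≤ M)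
    (hT : 0 ≤ T)
    (hwM : ∀ᵐ s ∂volume.restrict (Icc 0 T), ‖w s‖ ≤ M)
    (hξ : ContinuousOn ξ (Icc 0 T)) (hξ' : ContinuousOn ξ' (Icc 0 T))
    (hξS : ∀ t ∈ Icc 0 T, ξ t ∈ S) (hξ'S : ∀ t ∈ Icc 0 T, ξ' t ∈ S)
    (hint : IntegrableOn (fun s => controlField f₀ f (w s) (ξ s)) (Icc 0 T))
    (hint' : IntegrableOn (fun s => controlField f₀ f (w' s) (ξ' s)) (Icc 0 T))
    (hint'' : IntegrableOn (fun s => controlField f₀ f (w s) (ξ' s)) (Icc 0 T))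
    (hode : ∀ t ∈ Icc 0 T, ξ t = ξ₀ + ∫ s in Ioc 0 t, controlField f₀ f (w s) (ξ s))
    (hode' : ∀ t ∈ Icc 0 T, ξ' t = ξ₀' + ∫ s in Ioc 0 t, controlField f₀ f (w' s) (ξ' s)) :
    ‖ξ T - ξ' T‖ ≤ (‖ξ₀ - ξ₀'‖ + (1 + Fintype.card ι * M) * K * ∫ t in Ioc 0 T,
        ‖∫ s in Ioc 0 t, (controlField f₀ f (w s) (ξ' s) - controlField f₀ f (w' s) (ξ' s))‖) *
        Real.exp ((1 + Fintype.card ι * M) * K * T) +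
      ‖∫ s in Ioc 0 T, (controlField f₀ f (w s) (ξ' s) - controlField f₀ f (w' s) (ξ' s))‖ := by
  have hsub : ∀ t ∈ Icc 0 T, Ioc 0 t ⊆ Icc 0 T := fun t ht =>
    Ioc_subset_Icc_self.trans (Icc_subset_Icc_right ht.2)
  simpa only [sub_zero] using norm_le_of_sub_eq_add_setIntegral (y := fun t => ξ t - ξ' t)
    (g := fun t =>
      ∫ s in Ioc 0 t, (controlField f₀ f (w s) (ξ' s) - controlField f₀ f (w' s) (ξ' s)))
    (D := fun s => controlField f₀ f (w s) (ξ s) - controlField f₀ f (w s) (ξ' s))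
    hT (by positivity) (hξ.sub hξ') (intervalIntegral.continuousOn_primitive (hint''.sub hint'))
    (by
      filter_upwards [hwM, ae_restrict_mem measurableSet_Icc] with s hs hsI
      exact norm_controlField_sub_le h₀ hf hs (hξS s hsI) (hξ'S s hsI))
    fun t ht => by
      rw [hode t ht, hode' t ht,
        integral_sub (hint''.mono_set (hsub t ht)) (hint'.mono_set (hsub t ht)),
        integral_sub (hint.mono_set (hsub t ht)) (hint''.mono_set (hsub t ht))]
      abel

theorem tendsto_endpoint_of_tendstoWeakL2 [FiniteDimensional ℝ E] (hf₀ : ContDiff ℝ 1 f₀)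
    (hf : ∀ i, ContDiff ℝ 1 (f i)) (h₀C : ∀ p, ‖f₀ p‖ ≤ C * (1 + ‖p‖))
    (hfC : ∀ i p, ‖f i p‖ ≤ C * (1 + ‖p‖)) (hM : 0 ≤ M) (hT : 0 ≤ T) {u : ℕ → ℝ → ι → ℝ}
    (hu : ∀ n, AEStronglyMeasurable (u n) (volume.restrict (Icc 0 T)))
    (hw : AEStronglyMeasurable w (volume.restrict (Icc 0 T)))
    (huM : ∀ n, ∀ᵐ s ∂volume.restrict (Icc 0 T), ‖u n s‖ ≤ M)
    (hwM : ∀ᵐ s ∂volume.restrict (Icc 0 T), ‖w s‖ ≤ M)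
    (hweak : TendstoWeakL2 (volume.restrict (Icc 0 T)) u w) {x₀ : ℕ → E}
    (hx₀ : Tendsto x₀ atTop (𝓝 ξ₀)) {x : ℕ → ℝ → E} (hx : ∀ n, ContinuousOn (x n) (Icc 0 T))
    (hξ : ContinuousOn ξ (Icc 0 T))
    (hode : ∀ n, ∀ t ∈ Icc 0 T,
      x n t = x₀ n + ∫ s in Ioc 0 t, controlField f₀ f (u n s) (x n s))
    (hξode : ∀ t ∈ Icc 0 T, ξ t = ξ₀ + ∫ s in Ioc 0 t, controlField f₀ f (w s) (ξ s)) :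
    Tendsto (fun n => x n T) atTop (𝓝 (ξ T)) := by
  obtain ⟨A, hA⟩ := hx₀.norm.bddAbove_range
  set R := (max A ‖ξ₀‖ + (1 + Fintype.card ι * M) * C * T) *
    Real.exp ((1 + Fintype.card ι * M) * C * T)
  have hball : ∀ {v : ℝ → ι → ℝ} {y : ℝ → E} {y₀ : E},
      (∀ᵐ s ∂volume.restrict (Icc 0 T), ‖v s‖ ≤ M) → ContinuousOn y (Icc 0 T) →
      ‖y₀‖ ≤ max A ‖ξ₀‖ →
      (∀ t ∈ Icc 0 T, y t = y₀ + ∫ s in Ioc 0 t, controlField f₀ f (v s) (y s)) →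
      ∀ t ∈ Icc 0 T, y t ∈ Metric.closedBall 0 R := fun hv hy hy₀ hode t ht =>
    mem_closedBall_zero_iff.2
      (norm_le_of_eq_add_setIntegral_controlField h₀C hfC hM hv hy hy₀ hode t ht)
  obtain ⟨K, hK₀, hK⟩ :=
    exists_lipschitzOnWith_of_contDiff hf₀ hf (isCompact_closedBall (0 : E) R)
  have h₀c := hf₀.continuous
  have hfc := fun i => (hf i).continuous
  have hest := fun n => norm_sub_le_of_eq_add_setIntegral_controlField hK₀ hK hM hT (huM n)
    (hx n) hξ (hball (huM n) (hx n) (le_max_of_le_left (hA ⟨n, rfl⟩)) (hode n))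
    (hball hwM hξ (le_max_right _ _) hξode)
    (integrableOn_controlField h₀c hfc h₀C hfC (hu n) (huM n) (hx n))
    (integrableOn_controlField h₀c hfc h₀C hfC hw hwM hξ)
    (integrableOn_controlField h₀c hfc h₀C hfC (hu n) (huM n) hξ) (hode n) hξode
  have hG := tendsto_setIntegral_norm_setIntegral_controlField_sub h₀c hfc h₀C hfC hu hw huM hwM
    hweak hξ
  have hgT := tendsto_setIntegral_controlField_sub (f₀ := f₀) hfc hweak
    (fun n => Integrable.of_bound (hu n) M (huM n)) (Integrable.of_bound hw M hwM) hξ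
    ⟨hT, le_rfl⟩
  rw [tendsto_iff_norm_sub_tendsto_zero]
  refine squeeze_zero (fun n => norm_nonneg _) hest ?_
  simpa using (((tendsto_iff_norm_sub_tendsto_zero.1 hx₀).add (hG.const_mul _)).mul_const _).add
    hgT.norm

end ControlField

theorem stmt_13_general {d m : ℕ}
    (f₀ : EuclideanSpace ℝ (Fin d) → EuclideanSpace ℝ (Fin d))
    (f : Fin m → EuclideanSpace ℝ (Fin d) → EuclideanSpace ℝ (Fin d))
    (hf₀ : ContDiff ℝ 1 f₀) (hf : ∀ i, ContDiff ℝ 1 (f i))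
    (C : ℝ)
    (hgrow₀ : ∀ x, ‖f₀ x‖ ≤ C * (1 + ‖x‖))
    (hgrow : ∀ i x, ‖f i x‖ ≤ C * (1 + ‖x‖))
    (U : Set (Fin m → ℝ)) (hUcomp : IsCompact U)
    (T : ℝ) (hT : 0 < T)
    (u : ℕ → ℝ → Fin m → ℝ) (ulim : ℝ → Fin m → ℝ)
    (humeas : ∀ n, Measurable (u n)) (hulim_meas : Measurable ulim)
    (huU : ∀ n, ∀ᵐ t ∂(volume.restrict (Set.Icc (0:ℝ) T)), u n t ∈ U)
    (hulimU : ∀ᵐ t ∂(volume.restrict (Set.Icc (0:ℝ) T)), ulim t ∈ U)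
    (hweak : ∀ v : ℝ → Fin m → ℝ, MemLp v 2 (volume.restrict (Set.Icc (0:ℝ) T)) →
      Tendsto (fun n => ∫ t in Set.Icc (0:ℝ) T, ∑ i, v t i * u n t i) atTop
        (𝓝 (∫ t in Set.Icc (0:ℝ) T, ∑ i, v t i * ulim t i)))
    (x₀ : ℕ → EuclideanSpace ℝ (Fin d)) (xlim₀ : EuclideanSpace ℝ (Fin d))
    (hx₀ : Tendsto x₀ atTop (𝓝 xlim₀))
    (x : ℕ → ℝ → EuclideanSpace ℝ (Fin d)) (xlim : ℝ → EuclideanSpace ℝ (Fin d))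
    (hxcont : ∀ n, ContinuousOn (x n) (Set.Icc (0:ℝ) T))
    (hxlimcont : ContinuousOn xlim (Set.Icc (0:ℝ) T))
    (hxode : ∀ n, ∀ t ∈ Set.Icc (0:ℝ) T,
      x n t = x₀ n + ∫ s in Set.Ioc (0:ℝ) t, (f₀ (x n s) + ∑ i, u n s i • f i (x n s)))
    (hxlimode : ∀ t ∈ Set.Icc (0:ℝ) T,
      xlim t = xlim₀ + ∫ s in Set.Ioc (0:ℝ) t,
        (f₀ (xlim s) + ∑ i, ulim s i • f i (xlim s))) :
    Tendsto (fun n => x n T) atTop (𝓝 (xlim T)) := by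
  obtain ⟨M₀, hM₀⟩ := isBounded_iff_forall_norm_le.1 hUcomp.isBounded
  have hUM : ∀ c ∈ U, ‖c‖ ≤ max M₀ 0 := fun c hc => (hM₀ c hc).trans (le_max_left _ _)
  exact tendsto_endpoint_of_tendstoWeakL2 hf₀ hf hgrow₀ hgrow (le_max_right _ _) hT.le
    (fun n => (humeas n).aestronglyMeasurable) hulim_meas.aestronglyMeasurable
    (fun n => (huU n).mono fun s hs => hUM _ hs) (hulimU.mono fun s hs => hUM _ hs) hweak hx₀
    hxcont hxlimcont hxode hxlimode

/-- Sequential continuity of the endpoint map of a control-affine system with respect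
to convergence of initial conditions and weak L² convergence of admissible controls:
if `uₙ ⇀ u` weakly in `L²([0,T];ℝ^m)` with values in a compact convex set `U` a.e.,
`x_{n,0} → x₀`, and `xₙ`, `x` are the corresponding absolutely continuous trajectories
(encoded by their integral equations), then `xₙ(T) → x(T)`. -/
theorem stmt_13 {d m : ℕ}
    (f₀ : EuclideanSpace ℝ (Fin d) → EuclideanSpace ℝ (Fin d))
    (f : Fin m → EuclideanSpace ℝ (Fin d) → EuclideanSpace ℝ (Fin d))
    (hf₀ : ContDiff ℝ 1 f₀) (hf : ∀ i, ContDiff ℝ 1 (f i))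
    (C : ℝ) (hC : 0 < C)
    (hgrow₀ : ∀ x, ‖f₀ x‖ ≤ C * (1 + ‖x‖))
    (hgrow : ∀ i x, ‖f i x‖ ≤ C * (1 + ‖x‖))
    (U : Set (Fin m → ℝ)) (hUne : U.Nonempty) (hUcomp : IsCompact U)
    (hUconv : Convex ℝ U)
    (T : ℝ) (hT : 0 < T)
    (u : ℕ → ℝ → Fin m → ℝ) (ulim : ℝ → Fin m → ℝ)
    (humeas : ∀ n, Measurable (u n)) (hulim_meas : Measurable ulim)
    (huU : ∀ n, ∀ᵐ t ∂(volume.restrict (Set.Icc (0:ℝ) T)), u n t ∈ U)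
    (hulimU : ∀ᵐ t ∂(volume.restrict (Set.Icc (0:ℝ) T)), ulim t ∈ U)
    (hweak : ∀ v : ℝ → Fin m → ℝ, MemLp v 2 (volume.restrict (Set.Icc (0:ℝ) T)) →
      Tendsto (fun n => ∫ t in Set.Icc (0:ℝ) T, ∑ i, v t i * u n t i) atTop
        (𝓝 (∫ t in Set.Icc (0:ℝ) T, ∑ i, v t i * ulim t i)))
    (x₀ : ℕ → EuclideanSpace ℝ (Fin d)) (xlim₀ : EuclideanSpace ℝ (Fin d))
    (hx₀ : Tendsto x₀ atTop (𝓝 xlim₀))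
    (x : ℕ → ℝ → EuclideanSpace ℝ (Fin d)) (xlim : ℝ → EuclideanSpace ℝ (Fin d))
    (hxcont : ∀ n, ContinuousOn (x n) (Set.Icc (0:ℝ) T))
    (hxlimcont : ContinuousOn xlim (Set.Icc (0:ℝ) T))
    (hxinit : ∀ n, x n 0 = x₀ n) (hxliminit : xlim 0 = xlim₀)
    (hxode : ∀ n, ∀ t ∈ Set.Icc (0:ℝ) T,
      x n t = x₀ n + ∫ s in Set.Ioc (0:ℝ) t, (f₀ (x n s) + ∑ i, u n s i • f i (x n s)))
    (hxlimode : ∀ t ∈ Set.Icc (0:ℝ) T,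
      xlim t = xlim₀ + ∫ s in Set.Ioc (0:ℝ) t,
        (f₀ (xlim s) + ∑ i, ulim s i • f i (xlim s))) :
    Tendsto (fun n => x n T) atTop (𝓝 (xlim T)) :=
  stmt_13_general f₀ f hf₀ hf C hgrow₀ hgrow U hUcomp T hT u ulim humeas hulim_meas huU hulimU hweak
    x₀ xlim₀ hx₀ x xlim hxcont hxlimcont hxode hxlimode
end
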